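/- arXiv:2605.06556 — 3 statements merged into one kernel-verified Lean document; each statement's English description precedes it below -/
import Mathlib

section
/- With Adams D(k) = (2k - M)/(M-2), the Riemann sum P_M = Σ_{k=⌈M/2⌉}^{M-1} M·(1/k - 1/(k + D(k))) converges to 2·ln(2) - 1 as M → ∞. -/
/-!
Since `k + D(k) = M (k - 1) / (M - 2)`, each summand equals `2 / k + (M - 2) (1 / k - 1 / (k - 1))`.
The second part telescopes, so with `N = M - 1` and `n = ⌊N / 2⌋`,
`P_M = 2 (H_N - H_n) + (N - 1) (1 / N - 1 / n)`. Both `H_N - log N` and `H_n - log n` tend to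
Euler's constant, so `H_N - H_n → log 2`, while `(N - 1) (1 / N - 1 / n) → 1 - 2`.
-/

open Filter Finset

open Real in
theorem tendsto_harmonic_sub_harmonic {ι : Type*} {l : Filter ι} {m n : ι → ℕ} {c : ℝ}
    (hm : Tendsto m l atTop) (hn : Tendsto n l atTop) (hc : c ≠ 0)
    (hmn : Tendsto (fun i ↦ (m i : ℝ) / n i) l (nhds c)) :
    Tendsto (fun i ↦ (harmonic (m i) : ℝ) - harmonic (n i)) l (nhds (log c)) := by
  have hγ := ((tendsto_harmonic_sub_log.comp hm).sub (tendsto_harmonic_sub_log.comp hn)).add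
    (((continuousAt_log hc).tendsto).comp hmn)
  rw [sub_self, zero_add] at hγ
  refine hγ.congr' ?_
  filter_upwards [hm.eventually_ne_atTop 0, hn.eventually_ne_atTop 0] with i hmi hni
  simp only [Function.comp_apply]
  rw [log_div (Nat.cast_ne_zero.mpr hmi) (Nat.cast_ne_zero.mpr hni)]
  ring

theorem harmonic_sub_harmonic_eq_sum_Ico {m n : ℕ} (h : m ≤ n) :
    (harmonic n : ℝ) - harmonic m = ∑ i ∈ Ico m n, 1 / ((i : ℝ) + 1) := by
  simp [sum_Ico_eq_sub _ h, harmonic]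

theorem tendsto_natCast_div_div_two :
    Tendsto (fun N : ℕ ↦ (N : ℝ) / (N / 2 : ℕ)) atTop (nhds 2) := by
  have hinv : Tendsto (fun N : ℕ ↦ 2 + 1 / ((N / 2 : ℕ) : ℝ)) atTop (nhds 2) := by
    simpa using (tendsto_one_div_atTop_nhds_zero_nat.comp
      (Nat.tendsto_div_const_atTop two_ne_zero)).const_add (2 : ℝ)
  refine tendsto_of_tendsto_of_tendsto_of_le_of_le' tendsto_const_nhds hinv ?_ ?_ <;>
    filter_upwards [eventually_ge_atTop 2] with N hN
  all_goals
    have hpos : (0 : ℝ) < (N / 2 : ℕ) := by exact_mod_cast Nat.div_pos hN two_pos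
    have hlo : (2 * (N / 2 : ℕ) : ℝ) ≤ N := by exact_mod_cast Nat.mul_div_le N 2
    have hhi : (N : ℝ) ≤ 2 * (N / 2 : ℕ) + 1 := by exact_mod_cast (by omega : N ≤ 2 * (N / 2) + 1)
  · rw [le_div_iff₀ hpos]; exact hlo
  · rw [div_le_iff₀ hpos, add_mul, one_div_mul_cancel hpos.ne']; exact hhi

theorem adams_summand_eq {M k : ℝ} (hM0 : M ≠ 0) (hM2 : M ≠ 2) (hk0 : k ≠ 0) (hk1 : k ≠ 1) :
    M * (1 / k - 1 / (k + (2 * k - M) / (M - 2))) = 2 / k + (M - 2) * (1 / k - 1 / (k - 1)) := by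
  have hM2' : M - 2 ≠ 0 := sub_ne_zero.mpr hM2
  have hk1' : k - 1 ≠ 0 := sub_ne_zero.mpr hk1
  have hshift : k + (2 * k - M) / (M - 2) = M * (k - 1) / (M - 2) := by
    field_simp; ring
  rw [hshift]
  field_simp
  ring

theorem adams_sum_eq {N : ℕ} (hN : 2 ≤ N) :
    ∑ k ∈ Icc ((N + 1 + 1) / 2) (N + 1 - 1),
        ((N + 1 : ℕ) : ℝ) * (1 / k - 1 / ((k : ℝ) + (2 * (k : ℝ) - (N + 1 : ℕ)) / (((N + 1 : ℕ) : ℝ) - 2)))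
      = 2 * ((harmonic N : ℝ) - harmonic (N / 2)) + ((N : ℝ) - 1) * (1 / N - 1 / (N / 2 : ℕ)) := by
  have hn : 1 ≤ N / 2 := by omega
  have hIcc : Icc ((N + 1 + 1) / 2) (N + 1 - 1) = Ico (N / 2 + 1) (N + 1) := by
    ext k; simp only [mem_Icc, mem_Ico]; omega
  rw [hIcc, ← sum_Ico_add', harmonic_sub_harmonic_eq_sum_Ico (Nat.div_le_self N 2), mul_sum,
    ← sum_Ico_sub (fun i : ℕ ↦ 1 / (i : ℝ)) (Nat.div_le_self N 2), mul_sum, ← sum_add_distrib]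
  refine sum_congr rfl fun i hi ↦ ?_
  have hi1 : (1 : ℝ) ≤ i := by exact_mod_cast hn.trans (mem_Ico.mp hi).1
  have hN2 : (2 : ℝ) ≤ N := by exact_mod_cast hN
  push_cast
  rw [adams_summand_eq (by positivity) (by linarith) (by positivity) (by linarith)]
  ring

/-- With Adams D(k) = (2k - M)/(M - 2), the sum
P_M = Σ_{k=⌈M/2⌉}^{M-1} M(1/k - 1/(k + D(k))) converges to 2 ln 2 - 1 as M → ∞. -/
theorem adams_prob_limit :
    Tendsto (fun M : ℕ =>
      ∑ k ∈ Finset.Icc ((M + 1) / 2) (M - 1),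
        (M : ℝ) * (1 / k - 1 / ((k : ℝ) + (2 * (k : ℝ) - M) / ((M : ℝ) - 2))))
      atTop (nhds (2 * Real.log 2 - 1)) := by
  rw [← tendsto_add_atTop_iff_nat 1]
  have hH := tendsto_harmonic_sub_harmonic tendsto_id (Nat.tendsto_div_const_atTop two_ne_zero)
    two_ne_zero tendsto_natCast_div_div_two
  have hlim := (hH.const_mul 2).add (((tendsto_one_div_atTop_nhds_zero_nat (𝕜 := ℝ)).const_sub 1).mul
    (tendsto_natCast_div_div_two.const_sub 1))
  rw [show 2 * Real.log 2 + (1 - 0) * (1 - 2) = 2 * Real.log 2 - 1 by ring] at hlim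
  refine hlim.congr' ?_
  filter_upwards [eventually_ge_atTop 2] with N hN
  rw [adams_sum_eq hN]
  have hN0 : (N : ℝ) ≠ 0 := by positivity
  simp only [id]
  field_simp
end

section
/- Suppose δ(k) = k + 1/2 + O(1/k). Then the sum P_M = Σ_{k=⌈M/2⌉}^{M-1} M·(1/k - 1/(k + D(k))), with D(k) = ((M-k)·δ(k-1) - k·δ(M-k-1))/(δ(k-1) + δ(M-k-1)), converges to ln(2) - 1/2 as M → ∞. -/
open Filter

open Real Finset Topology

/-!
With `u = δ (k - 1)` and `v = δ (M - k - 1)` one has `k + D(k) = M u / (u + v)`, so the `k`-th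
summand is `M / k - 1 - v / u`. Replacing `v / u` by its model value `(M - k - 1/2) / (k - 1/2)`
leaves `M / k - (M - 1) / (k - 1/2) = 1 / k - (M - 1) / (2 k (k - 1/2))`. Over `M/2 ≤ k < M` the
terms `1 / k` sum to a difference of harmonic numbers, which tends to `log 2`, while
`(M - 1) / 2 · ∑ 1 / (k (k - 1/2))` is squeezed between two telescoping sums tending to `1/2`.
As `u ≥ M/4`, the replacement costs at most `(8 / M) ∑_{j < M} |δ j - (j + 1/2)|`, which tends
to `0` by Cesàro, since `δ j - (j + 1/2) → 0`.
-/

lemma sum_comp_le_sum_of_injOn {ι κ : Type*} {s : Finset ι} {t : Finset κ} {g : ι → κ}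
    {f : κ → ℝ} (hg : Set.InjOn g s) (hgt : ∀ i ∈ s, g i ∈ t) (hf : ∀ j ∈ t, 0 ≤ f j) :
    ∑ i ∈ s, f (g i) ≤ ∑ j ∈ t, f j := by
  classical
  rw [← sum_image hg]
  exact sum_le_sum_of_subset_of_nonneg (image_subset_iff.2 hgt) fun j hj _ ↦ hf j hj

lemma sum_Ico_inv_eq_harmonic_sub {a b : ℕ} (hab : a ≤ b) :
    ∑ k ∈ Ico (a + 1) (b + 1), (k : ℝ)⁻¹ = harmonic b - harmonic a := by
  rw [← sum_Ico_add', sum_Ico_eq_sub _ hab, harmonic, harmonic]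
  push_cast
  rfl

lemma tendsto_harmonic_sub_harmonic_s16 {a b : ℕ → ℕ} {r : ℝ} (ha : Tendsto a atTop atTop)
    (hb : Tendsto b atTop atTop) (hr : 0 < r)
    (hab : Tendsto (fun n ↦ (b n : ℝ) / a n) atTop (𝓝 r)) :
    Tendsto (fun n ↦ (harmonic (b n) : ℝ) - harmonic (a n)) atTop (𝓝 (log r)) := by
  have hlog := ((continuousAt_log hr.ne').tendsto.comp hab).add
    ((tendsto_harmonic_sub_log.comp hb).sub (tendsto_harmonic_sub_log.comp ha))
  rw [sub_self, add_zero] at hlog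
  refine hlog.congr' ?_
  filter_upwards [ha.eventually_gt_atTop 0, hb.eventually_gt_atTop 0] with n han hbn
  simp only [Function.comp_apply]
  rw [log_div (by positivity) (by positivity)]
  ring

lemma sum_Ico_one_div_mul_add_one (x : ℝ) {m n : ℕ} (hmn : m ≤ n) (hx : 0 < x + m) :
    ∑ k ∈ Ico m n, 1 / ((x + k) * (x + k + 1)) = 1 / (x + m) - 1 / (x + n) := by
  induction n, hmn using Nat.le_induction with
  | base => simp
  | succ n hmn ih =>
    have hn : 0 < x + n := hx.trans_le (by gcongr)
    have hn1 : 0 < x + n + 1 := by linarith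
    have hstep : 1 / ((x + n) * (x + n + 1)) = 1 / (x + n) - 1 / (x + n + 1) := by
      field_simp
      ring
    rw [sum_Ico_succ_top hmn, ih, hstep]
    push_cast
    ring

lemma tendsto_half_div_self :
    Tendsto (fun n : ℕ ↦ (((n + 1) / 2 : ℕ) : ℝ) / n) atTop (𝓝 (1 / 2)) := by
  have hup : Tendsto (fun n : ℕ ↦ 1 / 2 + (1 / 2) / (n : ℝ)) atTop (𝓝 (1 / 2)) := by
    simpa using (tendsto_const_div_atTop_nhds_zero_nat (1 / 2 : ℝ)).const_add (1 / 2 : ℝ)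
  refine tendsto_of_tendsto_of_tendsto_of_le_of_le' tendsto_const_nhds hup ?_ ?_ <;>
    filter_upwards [eventually_gt_atTop 0] with n hn <;>
    have hn' : (0 : ℝ) < n := by exact_mod_cast hn
  · rw [le_div_iff₀ hn']
    have : n ≤ 2 * ((n + 1) / 2) := by omega
    have : (n : ℝ) ≤ 2 * (((n + 1) / 2 : ℕ) : ℝ) := by exact_mod_cast this
    linarith
  · rw [div_le_iff₀ hn', add_mul, div_mul_cancel₀ _ hn'.ne']
    have : 2 * ((n + 1) / 2) ≤ n + 1 := by omega
    have : 2 * (((n + 1) / 2 : ℕ) : ℝ) ≤ n + 1 := by exact_mod_cast this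
    linarith

lemma tendsto_sum_Ico_half_inv :
    Tendsto (fun M : ℕ ↦ ∑ k ∈ Ico ((M + 1) / 2) M, (k : ℝ)⁻¹) atTop (𝓝 (log 2)) := by
  have h0 := tendsto_one_div_atTop_nhds_zero_nat (𝕜 := ℝ)
  have hratio : Tendsto (fun M : ℕ ↦ ((M - 1 : ℕ) : ℝ) / (((M + 1) / 2 - 1 : ℕ) : ℝ))
      atTop (𝓝 2) := by
    have h := (h0.const_sub 1).div (tendsto_half_div_self.sub h0) (by norm_num)
    norm_num at h
    refine h.congr' ?_
    filter_upwards [eventually_ge_atTop 3] with M hM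
    have hM' : (M : ℝ) ≠ 0 := by positivity
    have hm : (2 : ℝ) ≤ ((M + 1) / 2 : ℕ) := by exact_mod_cast (by omega : 2 ≤ (M + 1) / 2)
    have hm' : (((M + 1) / 2 : ℕ) : ℝ) - 1 ≠ 0 := by linarith
    rw [Pi.div_apply, Nat.cast_sub (by omega), Nat.cast_sub (by omega), Nat.cast_one]
    field_simp
  have hhalf : Tendsto (fun M : ℕ ↦ (M + 1) / 2 - 1) atTop atTop :=
    tendsto_atTop_atTop.2 fun b ↦ ⟨2 * b + 2, fun M hM ↦ by omega⟩
  refine (tendsto_harmonic_sub_harmonic_s16 hhalf (tendsto_sub_atTop_nat 1) two_pos hratio).congr' ?_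
  filter_upwards [eventually_ge_atTop 1] with M hM
  rw [← sum_Ico_inv_eq_harmonic_sub (by omega), Nat.sub_add_cancel (by omega),
    Nat.sub_add_cancel hM]

lemma sum_Ico_one_div_mul_sub_half_bounds {m n : ℕ} (hm : 2 ≤ m) (hmn : m ≤ n) :
    1 / (m : ℝ) - 1 / n ≤ ∑ k ∈ Ico m n, 1 / (k * (k - 1 / 2) : ℝ) ∧
      ∑ k ∈ Ico m n, 1 / (k * (k - 1 / 2) : ℝ) ≤ 1 / ((m : ℝ) - 1) - 1 / (n - 1) := by
  have hmR : (2 : ℝ) ≤ m := by exact_mod_cast hm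
  have hk (k : ℕ) (hk : k ∈ Ico m n) : (2 : ℝ) ≤ k := hmR.trans (by exact_mod_cast (mem_Ico.1 hk).1)
  have hlow := sum_Ico_one_div_mul_add_one 0 hmn (by linarith)
  have hupp := sum_Ico_one_div_mul_add_one (-1) hmn (by linarith)
  simp only [zero_add, neg_add_eq_sub] at hlow hupp
  constructor
  · rw [← hlow]
    refine sum_le_sum fun k hk' ↦ ?_
    have := hk k hk'
    exact one_div_le_one_div_of_le (by nlinarith) (by nlinarith)
  · rw [← hupp]
    refine sum_le_sum fun k hk' ↦ ?_
    have := hk k hk'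
    exact one_div_le_one_div_of_le (by nlinarith) (by nlinarith)

lemma tendsto_mul_sum_Ico_half_one_div_mul :
    Tendsto (fun M : ℕ ↦ ((M : ℝ) - 1) / 2 * ∑ k ∈ Ico ((M + 1) / 2) M, 1 / (k * (k - 1 / 2) : ℝ))
      atTop (𝓝 (1 / 2)) := by
  have h0 := tendsto_one_div_atTop_nhds_zero_nat (𝕜 := ℝ)
  have hr := tendsto_half_div_self
  have hlower := ((h0.const_sub 1).div_const 2).mul ((hr.inv₀ (by norm_num)).sub_const 1)
  have hupper := ((h0.const_sub 1).div ((hr.sub h0).const_mul 2) (by norm_num)).sub_const (1 / 2)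
  norm_num at hlower hupper
  refine tendsto_of_tendsto_of_tendsto_of_le_of_le' hlower hupper ?_ ?_ <;>
    filter_upwards [eventually_ge_atTop 3] with M hM <;>
    obtain ⟨hlow, hupp⟩ := sum_Ico_one_div_mul_sub_half_bounds (m := (M + 1) / 2) (n := M)
      (by omega) (by omega) <;>
    have hmR : (2 : ℝ) ≤ ((M + 1) / 2 : ℕ) := mod_cast (show 2 ≤ (M + 1) / 2 by omega) <;>
    have hMR : (3 : ℝ) ≤ M := mod_cast hM
  · calc (1 - (M : ℝ)⁻¹) / 2 * (M / ((M + 1) / 2 : ℕ) - 1)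
        = ((M : ℝ) - 1) / 2 * (1 / ((M + 1) / 2 : ℕ) - 1 / M) := by field_simp
      _ ≤ _ := mul_le_mul_of_nonneg_left hlow (by linarith)
  · calc _ ≤ ((M : ℝ) - 1) / 2 * (1 / ((((M + 1) / 2 : ℕ) : ℝ) - 1) - 1 / (M - 1)) :=
          mul_le_mul_of_nonneg_left hupp (by linarith)
      _ = (1 - (M : ℝ)⁻¹) / (2 * (((M + 1) / 2 : ℕ) / M - (M : ℝ)⁻¹)) - 1 / 2 := by
        have : (((M + 1) / 2 : ℕ) : ℝ) - 1 ≠ 0 := by linarith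
        have : (M : ℝ) - 1 ≠ 0 := by linarith
        field_simp

lemma tendsto_sum_Ico_half_div_sub_div :
    Tendsto (fun M : ℕ ↦ ∑ k ∈ Ico ((M + 1) / 2) M, ((M : ℝ) / k - ((M : ℝ) - 1) / (k - 1 / 2)))
      atTop (𝓝 (log 2 - 1 / 2)) := by
  refine (tendsto_sum_Ico_half_inv.sub tendsto_mul_sum_Ico_half_one_div_mul).congr fun M ↦ ?_
  rw [mul_sum, ← sum_sub_distrib]
  refine sum_congr rfl fun k hk ↦ ?_
  have hk : (1 : ℝ) ≤ k := by exact_mod_cast (by grind : 1 ≤ k)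
  have : (k : ℝ) ≠ 0 := by linarith
  have : (k : ℝ) * 2 - 1 ≠ 0 := by linarith
  field_simp
  ring

lemma natCast_of_mem_Ico_half {M k : ℕ} (hk : k ∈ Ico ((M + 1) / 2) M) :
    ((k - 1 : ℕ) : ℝ) = k - 1 ∧ ((M - k - 1 : ℕ) : ℝ) = M - k - 1 ∧ (1 : ℝ) ≤ k ∧
      (k : ℝ) + 1 ≤ M ∧ (M : ℝ) ≤ 2 * k := by
  rw [mem_Ico] at hk
  have h1 : 1 ≤ k := by omega
  have h2 : k + 1 ≤ M := by omega
  refine ⟨by push_cast [h1]; ring, by rw [Nat.sub_sub, Nat.cast_sub h2]; push_cast; ring,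
    by exact_mod_cast h1, by exact_mod_cast h2, by exact_mod_cast (by omega : M ≤ 2 * k)⟩

lemma eventually_delta_bounds {δ : ℕ → ℝ}
    (hδ : Tendsto (fun j : ℕ ↦ δ j - (j + 1 / 2)) atTop (𝓝 0)) :
    ∀ᶠ M : ℕ in atTop, ∀ k ∈ Ico ((M + 1) / 2) M,
      (M : ℝ) / 4 ≤ δ (k - 1) ∧ 0 < δ (k - 1) + δ (M - k - 1) := by
  obtain ⟨E, hE⟩ := hδ.abs.bddAbove_range
  have hE' (j : ℕ) : |δ j - (j + 1 / 2)| ≤ E := hE ⟨j, rfl⟩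
  filter_upwards [tendsto_natCast_atTop_atTop.eventually_ge_atTop (4 * E + 4)] with M hM k hk
  obtain ⟨hk1, hMk1, -, -, hMk⟩ := natCast_of_mem_Ico_half hk
  have hu := abs_le.1 (hE' (k - 1))
  have hv := abs_le.1 (hE' (M - k - 1))
  rw [hk1] at hu
  rw [hMk1] at hv
  have hE0 : 0 ≤ E := (abs_nonneg _).trans (hE' 0)
  constructor <;> linarith

lemma abs_div_sub_div_le {u v w z : ℝ} (hu : 0 < u) (hw : 0 < w) (hz : 0 ≤ z) (hzw : z ≤ w) :
    |v / u - z / w| ≤ (|v - z| + |u - w|) / u := by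
  have hzw' : z / w ≤ 1 := div_le_one_of_le₀ hzw hw.le
  have key : v / u - z / w = ((v - z) - z / w * (u - w)) / u := by
    field_simp
    ring
  rw [key, abs_div, abs_of_pos hu]
  gcongr
  calc |(v - z) - z / w * (u - w)| ≤ |v - z| + |z / w * (u - w)| := abs_sub _ _
    _ ≤ |v - z| + |u - w| := by
      rw [abs_mul, abs_of_nonneg (div_nonneg hz hw.le)]
      gcongr
      exact mul_le_of_le_one_left (abs_nonneg _) hzw'

lemma tendsto_sum_Ico_half_ratio_sub_ratio {δ : ℕ → ℝ}
    (hδ : Tendsto (fun j : ℕ ↦ δ j - (j + 1 / 2)) atTop (𝓝 0)) :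
    Tendsto (fun M : ℕ ↦ ∑ k ∈ Ico ((M + 1) / 2) M,
      (δ (M - k - 1) / δ (k - 1) - ((M : ℝ) - k - 1 / 2) / (k - 1 / 2))) atTop (𝓝 0) := by
  set ε : ℕ → ℝ := fun j ↦ |δ j - (j + 1 / 2)| with hε
  have hces : Tendsto (fun M : ℕ ↦ 8 * ((M : ℝ)⁻¹ * ∑ j ∈ range M, ε j)) atTop (𝓝 0) := by
    have h := (hδ.abs.cesaro).const_mul 8
    rwa [abs_zero, mul_zero] at h
  refine squeeze_zero_norm' ?_ hces
  filter_upwards [eventually_delta_bounds hδ, eventually_gt_atTop 0] with M hbd hM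
  have hM' : (0 : ℝ) < M := by exact_mod_cast hM
  have hterm : ∀ k ∈ Ico ((M + 1) / 2) M,
      |δ (M - k - 1) / δ (k - 1) - ((M : ℝ) - k - 1 / 2) / (k - 1 / 2)| ≤
        4 / M * (ε (M - k - 1) + ε (k - 1)) := by
    intro k hk
    obtain ⟨hk1, hMk1, h1k, hkM, hMk⟩ := natCast_of_mem_Ico_half hk
    have hu := (hbd k hk).1
    calc _ ≤ (|δ (M - k - 1) - ((M : ℝ) - k - 1 / 2)| + |δ (k - 1) - (k - 1 / 2)|) / δ (k - 1) :=
          abs_div_sub_div_le (by linarith) (by linarith) (by linarith) (by linarith)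
      _ = (ε (M - k - 1) + ε (k - 1)) / δ (k - 1) := by
          simp only [hε, hk1, hMk1]
          ring_nf
      _ ≤ (ε (M - k - 1) + ε (k - 1)) / (M / 4) := by gcongr
      _ = 4 / M * (ε (M - k - 1) + ε (k - 1)) := by ring
  have hinj₁ : Set.InjOn (fun k ↦ M - k - 1) (Ico ((M + 1) / 2) M) := by
    intro a ha b hb hab
    simp only [coe_Ico, Set.mem_Ico] at ha hb hab
    omega
  have hinj₂ : Set.InjOn (fun k ↦ k - 1) (Ico ((M + 1) / 2) M) := by
    intro a ha b hb hab
    simp only [coe_Ico, Set.mem_Ico] at ha hb hab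
    omega
  have hrange : ∀ k ∈ Ico ((M + 1) / 2) M, M - k - 1 ∈ range M ∧ k - 1 ∈ range M := by
    intro k hk
    simp only [mem_Ico, mem_range] at hk ⊢
    omega
  calc _ ≤ ∑ k ∈ Ico ((M + 1) / 2) M,
        |δ (M - k - 1) / δ (k - 1) - ((M : ℝ) - k - 1 / 2) / (k - 1 / 2)| := norm_sum_le _ _
    _ ≤ ∑ k ∈ Ico ((M + 1) / 2) M, 4 / M * (ε (M - k - 1) + ε (k - 1)) := sum_le_sum hterm
    _ = 4 / M * (∑ k ∈ Ico ((M + 1) / 2) M, ε (M - k - 1) +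
          ∑ k ∈ Ico ((M + 1) / 2) M, ε (k - 1)) := by rw [← sum_add_distrib, mul_sum]
    _ ≤ 4 / M * (∑ j ∈ range M, ε j + ∑ j ∈ range M, ε j) := by
      gcongr
      · exact sum_comp_le_sum_of_injOn hinj₁ (fun k hk ↦ (hrange k hk).1) fun j _ ↦ abs_nonneg _
      · exact sum_comp_le_sum_of_injOn hinj₂ (fun k hk ↦ (hrange k hk).2) fun j _ ↦ abs_nonneg _
    _ = 8 * ((M : ℝ)⁻¹ * ∑ j ∈ range M, ε j) := by ring

lemma mul_one_div_sub_one_div_add_div {M k u v : ℝ} (hM : M ≠ 0) (hu : u ≠ 0)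
    (huv : u + v ≠ 0) :
    M * (1 / k - 1 / (k + ((M - k) * u - k * v) / (u + v))) = M / k - 1 - v / u := by
  have hden : k + ((M - k) * u - k * v) / (u + v) = M * u / (u + v) := by
    field_simp
    ring
  rw [hden]
  field_simp
  ring

theorem asymptotically_linear_prob_limit_general (δ : ℕ → ℝ)
    (C : ℝ) (hC : ∀ k : ℕ, 1 ≤ k → |δ k - ((k : ℝ) + 1/2)| ≤ C / k) :
    Tendsto (fun M : ℕ =>
      ∑ k ∈ Finset.Icc ((M + 1) / 2) (M - 1),
        (M : ℝ) * (1 / k - 1 / ((k : ℝ) +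
          (((M : ℝ) - k) * δ (k - 1) - (k : ℝ) * δ (M - k - 1)) /
            (δ (k - 1) + δ (M - k - 1)))))
      atTop (nhds (Real.log 2 - 1/2)) := by
  have hδ : Tendsto (fun j : ℕ ↦ δ j - (j + 1 / 2)) atTop (𝓝 0) :=
    squeeze_zero_norm' ((eventually_ge_atTop 1).mono hC) (tendsto_const_div_atTop_nhds_zero_nat C)
  have h := tendsto_sum_Ico_half_div_sub_div.sub (tendsto_sum_Ico_half_ratio_sub_ratio hδ)
  rw [sub_zero] at h
  refine h.congr' ?_
  filter_upwards [eventually_delta_bounds hδ, eventually_gt_atTop 0] with M hbd hM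
  rw [Icc_sub_one_right_eq_Ico_of_not_isMin (by simpa using hM.ne'), ← sum_sub_distrib]
  refine sum_congr rfl fun k hk ↦ ?_
  obtain ⟨hu, huv⟩ := hbd k hk
  obtain ⟨-, -, hk1, -, -⟩ := natCast_of_mem_Ico_half hk
  have hM' : (0 : ℝ) < M := by exact_mod_cast hM
  rw [mul_one_div_sub_one_div_add_div hM'.ne' (by linarith) huv.ne']
  have : (k : ℝ) * 2 - 1 ≠ 0 := by linarith
  field_simp
  ring

/-- If δ is a strictly increasing divisor function with δ(k) = k + 1/2 + O(1/k), then
P_M = Σ_{k=⌈M/2⌉}^{M-1} M(1/k - 1/(k + D(k))) converges to ln 2 - 1/2 as M → ∞. -/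
theorem asymptotically_linear_prob_limit (δ : ℕ → ℝ) (hmono : StrictMono δ)
    (C : ℝ) (hC : ∀ k : ℕ, 1 ≤ k → |δ k - ((k : ℝ) + 1/2)| ≤ C / k) :
    Tendsto (fun M : ℕ =>
      ∑ k ∈ Finset.Icc ((M + 1) / 2) (M - 1),
        (M : ℝ) * (1 / k - 1 / ((k : ℝ) +
          (((M : ℝ) - k) * δ (k - 1) - (k : ℝ) * δ (M - k - 1)) /
            (δ (k - 1) + δ (M - k - 1)))))
      atTop (nhds (Real.log 2 - 1/2)) :=
  asymptotically_linear_prob_limit_general δ C hC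
end

section
/- Fix k ∈ (-1/3, 1/3). Under the uniform distribution on the triangle {(x,y) : 1 < x < y < h}, the probability that (1 - 2x + y)/(3y) > k converges to 1/2 - (3/2)k as h → ∞. Consequently, τ = (1 - 2x + y)/(3y) is asymptotically uniformly distributed on (-1/3, 1/3). -/
/-!
For `y > 1` the condition `τ > k` reads `x < c * y + 1 / 2` with `c = (1 - 3k) / 2 ∈ (0, 1)`.
Slicing at height `y`, both regions therefore have sections whose lengths are eventually affine
in `y` (`c * y - 1 / 2` and `y - 1`), so both areas are quadratic polynomials in `h` for large `h`,
with leading coefficients `c / 2` and `1 / 2`; their ratio tends to `c = 1 / 2 - 3k / 2`.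
-/

open Filter MeasureTheory Set Topology

lemma measureReal_preimage_swap_regionBetween {α : Type*} [MeasurableSpace α] {μ : Measure α}
    [SigmaFinite μ] {f g : α → ℝ} {s : Set α} (hf : IntegrableOn f s μ) (hg : IntegrableOn g s μ)
    (hs : MeasurableSet s) (hfg : ∀ x ∈ s, f x ≤ g x) :
    (volume.prod μ).real (Prod.swap ⁻¹' regionBetween f g s) = ∫ x in s, (g x - f x) ∂μ := by
  have hswap : MeasurePreserving (MeasurableEquiv.prodComm : ℝ × α ≃ᵐ α × ℝ) (volume.prod μ)
      (μ.prod volume) := Measure.measurePreserving_swap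
  rw [measureReal_def, show Prod.swap ⁻¹' regionBetween f g s =
      (MeasurableEquiv.prodComm : ℝ × α ≃ᵐ α × ℝ) ⁻¹' regionBetween f g s from rfl,
    hswap.measure_preimage_equiv,
    volume_regionBetween_eq_integral hf hg hs hfg]
  exact ENNReal.toReal_ofReal (setIntegral_nonneg hs fun x hx => sub_nonneg.2 (hfg x hx))

lemma exists_integral_Ioo_eq_of_eventually_affine {f : ℝ → ℝ} (hf : Continuous f) (a u v : ℝ)
    (hfuv : ∀ᶠ y in atTop, f y = u * y + v) :
    ∃ A, ∀ᶠ h in atTop, ∫ y in Ioo a h, f y = u / 2 * h ^ 2 + v * h + A := by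
  obtain ⟨H, hH⟩ := eventually_atTop.1 hfuv
  refine ⟨(∫ y in a..max a H, f y) - u / 2 * max a H ^ 2 - v * max a H, ?_⟩
  filter_upwards [eventually_ge_atTop (max a H)] with h hh
  have haH : a ≤ max a H := le_max_left _ _
  have htail : ∫ y in max a H..h, f y = ∫ y in max a H..h, (u * y + v) :=
    intervalIntegral.integral_congr fun y hy =>
      hH y ((le_max_right a H).trans (uIcc_of_le hh ▸ hy).1)
  rw [← integral_Ioc_eq_integral_Ioo, ← intervalIntegral.integral_of_le (haH.trans hh),
    ← intervalIntegral.integral_add_adjacent_intervals (hf.intervalIntegrable a (max a H))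
      (hf.intervalIntegrable _ h), htail,
    intervalIntegral.integral_add ((continuous_const_mul u).intervalIntegrable _ _)
      intervalIntegrable_const, intervalIntegral.integral_const_mul, integral_id,
    intervalIntegral.integral_const, smul_eq_mul]
  ring

lemma tendsto_quadratic_div_quadratic (a b c a' b' c' : ℝ) (ha' : a' ≠ 0) :
    Tendsto (fun h : ℝ => (a * h ^ 2 + b * h + c) / (a' * h ^ 2 + b' * h + c')) atTop
      (𝓝 (a / a')) := by
  let F : ℝ → ℝ := fun t => (a + b * t + c * t ^ 2) / (a' + b' * t + c' * t ^ 2)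
  have hF : ContinuousAt F 0 := by fun_prop (disch := simpa)
  have hlim : Tendsto (F ∘ fun h => h⁻¹) atTop (𝓝 (a / a')) := by
    simpa [F] using hF.tendsto.comp tendsto_inv_atTop_zero
  refine hlim.congr' ?_
  filter_upwards [eventually_ne_atTop 0] with h hh
  simp only [Function.comp, F]
  field_simp

lemma lt_tau_iff {k x y : ℝ} (hy : 0 < y) :
    k < (1 - 2 * x + y) / (3 * y) ↔ x < (1 - 3 * k) / 2 * y + 1 / 2 := by
  rw [lt_div_iff₀ (by positivity)]
  constructor <;> intro <;> linarith

lemma eventually_max_one_min_eq {c : ℝ} (hc0 : 0 < c) (hc1 : c < 1) :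
    ∀ᶠ y in atTop, max 1 (min y (c * y + 1 / 2)) = c * y + 1 / 2 := by
  filter_upwards [eventually_ge_atTop (1 / (2 * c)), eventually_ge_atTop (1 / (2 * (1 - c)))]
    with y hyc hyc'
  rw [div_le_iff₀ (by linarith)] at hyc hyc'
  rw [min_eq_right (by nlinarith), max_eq_right (by nlinarith)]

lemma triangle_eq_preimage_swap_regionBetween (h : ℝ) :
    {p : ℝ × ℝ | 1 < p.1 ∧ p.1 < p.2 ∧ p.2 < h} =
      Prod.swap ⁻¹' regionBetween 1 id (Ioo 1 h) := by
  ext ⟨x, y⟩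
  simp only [regionBetween, mem_ofPred_eq, mem_preimage, Prod.swap_prod_mk, mem_Ioo, Pi.one_apply,
    id_eq]
  constructor
  · rintro ⟨h1x, hxy, hyh⟩
    exact ⟨⟨h1x.trans hxy, hyh⟩, h1x, hxy⟩
  · rintro ⟨⟨-, hyh⟩, h1x, hxy⟩
    exact ⟨h1x, hxy, hyh⟩

/-- The `max 1` keeps the upper boundary above the lower one for `y` near `1`, where
`(1 - 3k) / 2 * y + 1 / 2` may drop below `1` and the section is empty. -/
lemma setOf_lt_tau_eq_preimage_swap_regionBetween (k h : ℝ) :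
    {p : ℝ × ℝ | 1 < p.1 ∧ p.1 < p.2 ∧ p.2 < h ∧ k < (1 - 2 * p.1 + p.2) / (3 * p.2)} =
      Prod.swap ⁻¹' regionBetween 1 (fun y => max 1 (min y ((1 - 3 * k) / 2 * y + 1 / 2)))
        (Ioo 1 h) := by
  ext ⟨x, y⟩
  simp only [regionBetween, mem_ofPred_eq, mem_preimage, Prod.swap_prod_mk, mem_Ioo, Pi.one_apply,
    lt_max_iff, lt_min_iff]
  constructor
  · rintro ⟨h1x, hxy, hyh, hk⟩
    exact ⟨⟨h1x.trans hxy, hyh⟩, h1x, Or.inr ⟨hxy, (lt_tau_iff (by linarith)).1 hk⟩⟩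
  · rintro ⟨⟨h1y, hyh⟩, h1x, hx1 | ⟨hxy, hk⟩⟩
    · exact (lt_asymm h1x hx1).elim
    · exact ⟨h1x, hxy, hyh, (lt_tau_iff (by linarith)).2 hk⟩

/-- Under the uniform distribution on the triangle {(x,y) : 1 < x < y < h}, the
probability that τ = (1 - 2x + y)/(3y) > k converges to 1/2 - (3/2)k as h → ∞,
for each fixed k ∈ (-1/3, 1/3); hence τ is asymptotically uniform on (-1/3, 1/3). -/
theorem tau_asymptotically_uniform (k : ℝ) (h1 : -(1/3) < k) (h2 : k < 1/3) :
    Tendsto (fun h : ℝ =>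
      (volume {p : ℝ × ℝ | 1 < p.1 ∧ p.1 < p.2 ∧ p.2 < h ∧
        k < (1 - 2*p.1 + p.2) / (3*p.2)}).toReal /
      (volume {p : ℝ × ℝ | 1 < p.1 ∧ p.1 < p.2 ∧ p.2 < h}).toReal)
      atTop (nhds (1/2 - 3/2 * k)) := by
  obtain ⟨A, hA⟩ := exists_integral_Ioo_eq_of_eventually_affine
    (f := fun y => max 1 (min y ((1 - 3 * k) / 2 * y + 1 / 2)) - 1) (by fun_prop) 1
    ((1 - 3 * k) / 2) (-1 / 2) <|
    (eventually_max_one_min_eq (c := (1 - 3 * k) / 2) (by linarith) (by linarith)).mono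
      fun y hy => by rw [hy]; ring
  obtain ⟨B, hB⟩ := exists_integral_Ioo_eq_of_eventually_affine (continuous_sub_right 1) 1 1 (-1)
    (Eventually.of_forall fun y => by ring)
  rw [show 1 / 2 - 3 / 2 * k = (1 - 3 * k) / 2 / 2 / (1 / 2) by ring]
  refine (tendsto_quadratic_div_quadratic _ (-1 / 2) A _ (-1) B one_half_pos.ne').congr' ?_
  filter_upwards [hA, hB] with h hAh hBh
  have hint {f : ℝ → ℝ} (hf : Continuous f) : IntegrableOn f (Ioo 1 h) :=
    hf.integrableOn_Icc.mono_set Ioo_subset_Icc_self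
  rw [setOf_lt_tau_eq_preimage_swap_regionBetween, triangle_eq_preimage_swap_regionBetween,
    Measure.volume_eq_prod, ← measureReal_def, ← measureReal_def,
    measureReal_preimage_swap_regionBetween (f := 1) (hint continuous_const) (hint (by fun_prop))
      measurableSet_Ioo (fun _ _ => by exact le_max_left _ _),
    measureReal_preimage_swap_regionBetween (f := 1) (hint continuous_const) (hint continuous_id)
      measurableSet_Ioo fun y hy => hy.1.le]
  exact congr_arg₂ (· / ·) hAh.symm hBh.symm
end
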